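/- arXiv:2104.09850 — 5 statements merged into one kernel-verified Lean document; each statement's English description precedes it below -/
import Mathlib

section
/- (Invariance checking.) Assume (N₁, m₁) is E-equivalent to (N₂, m₂). Then for all pairs of markings m₁' over P₁ and m₂' over P₂ such that m₁' ⊎ m₂' satisfies E and m₂' is reachable in (N₂, m₂), the marking m₁' is reachable in (N₁, m₁). -/
/-- A labeled Petri net over a global type `V` of variables/places and labels in
`L` (`none` is the silent label `τ`).  The net only uses the places in `places`:
the flow functions vanish outside of it. -/
structure LNet (V L : Type) where
  T : Type
  places : Set V
  Pre : T → V → ℕ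
  Post : T → V → ℕ
  pre_supp : ∀ t p, p ∉ places → Pre t p = 0
  post_supp : ∀ t p, p ∉ places → Post t p = 0
  label : T → Option L

namespace LNet

variable {V L : Type}

/-- Transition `t` is enabled at marking `m`. -/
def Enabled (N : LNet V L) (m : V → ℕ) (t : N.T) : Prop :=
  ∀ p, N.Pre t p ≤ m p

/-- `m →t m'` : `t` is enabled at `m` and `m' = m - Pre(t) + Post(t)` (pointwise). -/
def Fire (N : LNet V L) (m : V → ℕ) (t : N.T) (m' : V → ℕ) : Prop :=
  N.Enabled m t ∧ ∀ p, m' p = m p - N.Pre t p + N.Post t p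

/-- `m ⇒ρ m'` : the firing sequence `ρ` fires from `m` to `m'`. -/
def FireSeq (N : LNet V L) : (V → ℕ) → List N.T → (V → ℕ) → Prop
  | m, [], m' => m' = m
  | m, t :: ρ, m'' => ∃ m', N.Fire m t m' ∧ N.FireSeq m' ρ m''

/-- Reachability from `m₀`. -/
def Reach (N : LNet V L) (m₀ m : V → ℕ) : Prop :=
  ∃ ρ, N.FireSeq m₀ ρ m

/-- The observation sequence of a firing sequence (silent transitions erased). -/
def Obs (N : LNet V L) (ρ : List N.T) : List L :=
  ρ.filterMap N.label

end LNet

/-- `m₁ ⊎ m₂ ⊨ E` : the two markings are compatible and, jointly, satisfy the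
constraint system `E` (i.e. `E ∧ m̲₁ ∧ m̲₂` is satisfiable: some valuation of all
the variables agrees with `m₁` on `P₁`, with `m₂` on `P₂` and satisfies `E`). -/
def JSat {V L : Type} (N₁ N₂ : LNet V L) (E : (V → ℕ) → Prop)
    (m₁ m₂ : V → ℕ) : Prop :=
  ∃ v : V → ℕ, (∀ p ∈ N₁.places, v p = m₁ p) ∧ (∀ p ∈ N₂.places, v p = m₂ p) ∧ E v

/-- `(N₁, m₁) ⊒_E (N₂, m₂)` : `(N₂, m₂)` is an `E`-abstraction of `(N₁, m₁)`,
conditions (A1) and (A2). -/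
def EAbs {V L : Type} (N₁ : LNet V L) (m₁ : V → ℕ) (N₂ : LNet V L) (m₂ : V → ℕ)
    (E : (V → ℕ) → Prop) : Prop :=
  -- (A1) the initial markings jointly satisfy `E`
  JSat N₁ N₂ E m₁ m₂ ∧
  -- (A2)
  ∀ ρ₁ m₁', N₁.FireSeq m₁ ρ₁ m₁' →
    (∃ m₂' : V → ℕ, JSat N₁ N₂ E m₁' m₂') ∧
    ∀ m₂' : V → ℕ, JSat N₁ N₂ E m₁' m₂' →
      ∃ ρ₂ m₂'', N₂.FireSeq m₂ ρ₂ m₂'' ∧ (∀ p ∈ N₂.places, m₂'' p = m₂' p) ∧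
        N₁.Obs ρ₁ = N₂.Obs ρ₂

/-- `(N₁, m₁) ▷_E (N₂, m₂)` : `E`-abstraction equivalence (abstraction in both
directions). -/
def EEquiv {V L : Type} (N₁ : LNet V L) (m₁ : V → ℕ) (N₂ : LNet V L) (m₂ : V → ℕ)
    (E : (V → ℕ) → Prop) : Prop :=
  EAbs N₁ m₁ N₂ m₂ E ∧ EAbs N₂ m₂ N₁ m₁ E

/-- `F` is a formula whose (free) variables all belong to `S`: its truth value
only depends on the values of the variables in `S`. -/
def DependsOnVars {V : Type} (F : (V → ℕ) → Prop) (S : Set V) : Prop :=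
  ∀ v w : V → ℕ, (∀ x ∈ S, v x = w x) → (F v ↔ F w)

theorem JSat.symm {V L : Type} {N₁ N₂ : LNet V L} {E : (V → ℕ) → Prop} {m₁ m₂ : V → ℕ}
    (h : JSat N₁ N₂ E m₁ m₂) : JSat N₂ N₁ E m₂ m₁ :=
  let ⟨v, hv₁, hv₂, hE⟩ := h
  ⟨v, hv₂, hv₁, hE⟩

theorem EAbs.exists_reach_of_reach {V L : Type} {N₁ N₂ : LNet V L} {m₁ m₂ : V → ℕ}
    {E : (V → ℕ) → Prop} (h : EAbs N₁ m₁ N₂ m₂ E) {m₁' m₂' : V → ℕ}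
    (hreach : N₁.Reach m₁ m₁') (hsat : JSat N₁ N₂ E m₁' m₂') :
    ∃ m₂'', N₂.Reach m₂ m₂'' ∧ ∀ p ∈ N₂.places, m₂'' p = m₂' p := by
  obtain ⟨ρ₁, hρ₁⟩ := hreach
  obtain ⟨ρ₂, m₂'', hρ₂, hagree, -⟩ := (h.2 ρ₁ m₁' hρ₁).2 m₂' hsat
  exact ⟨m₂'', ⟨ρ₂, hρ₂⟩, hagree⟩

/-- (Invariance checking.)  If `(N₁, m₁) ▷_E (N₂, m₂)` then every pair of markings
`m₁'` over `P₁` and `m₂'` over `P₂` with `m₁' ⊎ m₂' ⊨ E` and `m₂'` reachable in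
`(N₂, m₂)` is such that `m₁'` is reachable in `(N₁, m₁)` (as a marking over `P₁`). -/
theorem invariance_checking {V L : Type} (N₁ N₂ : LNet V L) (m₁ m₂ : V → ℕ)
    (E : (V → ℕ) → Prop) (h : EEquiv N₁ m₁ N₂ m₂ E) :
    ∀ m₁' m₂' : V → ℕ, JSat N₁ N₂ E m₁' m₂' → N₂.Reach m₂ m₂' →
      ∃ m₁'', N₁.Reach m₁ m₁'' ∧ ∀ p ∈ N₁.places, m₁'' p = m₁' p :=
  fun _ _ hsat hreach => h.2.exists_reach_of_reach hreach hsat.symm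
end

section
/- (Preservation by relabeling.) If (N₁, m₁) ▷_E (N₂, m₂), then (N₁[a/b], m₁) ▷_E (N₂[a/b], m₂), where N[a/b] relabels every transition labeled a to be labeled b instead. -/
/-- `F` is a formula whose (free) variables all belong to `S`: its truth value
only depends on the values of the variables in `S`. -/
def LNetDependsOn {V : Type} (F : (V → ℕ) → Prop) (S : Set V) : Prop :=
  ∀ v w : V → ℕ, (∀ x ∈ S, v x = w x) → (F v ↔ F w)

/-- `N[a/b]` : relabel every transition labeled `a` to carry label `b` instead
(`b` may be the silent label `τ`, i.e. `none`). -/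
def LNet.relabel {V L : Type} [DecidableEq L] (N : LNet V L) (a : L) (b : Option L) :
    LNet V L :=
  { N with label := fun t => if N.label t = some a then b else N.label t }

namespace LNet

variable {V L : Type} [DecidableEq L]

def relabelObs (a : L) (b : Option L) (l : L) : Option L :=
  if l = a then b else some l

theorem obs_relabel (N : LNet V L) (a : L) (b : Option L) (ρ : List N.T) :
    (N.relabel a b).Obs ρ = (N.Obs ρ).filterMap (relabelObs a b) := by
  simp only [Obs, relabel, List.filterMap_filterMap]
  congr 1
  funext t
  cases N.label t <;> simp [relabelObs]

theorem fireSeq_relabel_iff (N : LNet V L) (a : L) (b : Option L) (ρ : List N.T)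
    (m m' : V → ℕ) : (N.relabel a b).FireSeq m ρ m' ↔ N.FireSeq m ρ m' := by
  induction ρ generalizing m with
  | nil => rfl
  | cons t ρ ih => exact exists_congr fun m₀ => and_congr_right fun _ => ih m₀

end LNet

theorem EAbs.relabel {V L : Type} [DecidableEq L] {N₁ N₂ : LNet V L} {m₁ m₂ : V → ℕ}
    {E : (V → ℕ) → Prop} (h : EAbs N₁ m₁ N₂ m₂ E) (a : L) (b : Option L) :
    EAbs (N₁.relabel a b) m₁ (N₂.relabel a b) m₂ E := by
  obtain ⟨hinit, hsim⟩ := h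
  refine ⟨hinit, fun ρ₁ m₁' hρ₁ => ?_⟩
  obtain ⟨hcompat, hmatch⟩ := hsim ρ₁ m₁' ((N₁.fireSeq_relabel_iff a b ρ₁ m₁ m₁').mp hρ₁)
  refine ⟨hcompat, fun m₂' hm₂' => ?_⟩
  obtain ⟨ρ₂, m₂'', hρ₂, hagree, hobs⟩ := hmatch m₂' hm₂'
  refine ⟨ρ₂, m₂'', (N₂.fireSeq_relabel_iff a b ρ₂ m₂ m₂'').mpr hρ₂, hagree, ?_⟩
  rw [LNet.obs_relabel N₁ a b ρ₁, LNet.obs_relabel N₂ a b ρ₂, hobs]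

/-- (Preservation by relabeling.)  If `(N₁, m₁) ▷_E (N₂, m₂)` then
`(N₁[a/b], m₁) ▷_E (N₂[a/b], m₂)`. -/
theorem EEquiv_relabel {V L : Type} [DecidableEq L] (N₁ N₂ : LNet V L)
    (m₁ m₂ : V → ℕ) (E : (V → ℕ) → Prop) (a : L) (b : Option L)
    (h : EEquiv N₁ m₁ N₂ m₂ E) :
    EEquiv (N₁.relabel a b) m₁ (N₂.relabel a b) m₂ E :=
  ⟨h.1.relabel a b, h.2.relabel a b⟩
end

section
/- (Projection of firing sequences in a synchronous product.) If (N₁ ∥ N₂, m₁ ∥ m₂) ⇒ρ (N₁ ∥ N₂, m₁' ∥ m₂'), then the projections ρ·1 and ρ·2 are firing sequences of the components: (Nᵢ, mᵢ) ⇒_{ρ·i} (Nᵢ, mᵢ') for i ∈ {1,2}, and ρ·1 and ρ·2 can be synchronized (ρ·1 ∥ ρ·2 ≠ ∅). Conversely, if (Nᵢ, mᵢ) ⇒_{ρᵢ} (Nᵢ, mᵢ') for i ∈ {1,2} and ρ ∈ (ρ₁ ∥ ρ₂), then (N₁ ∥ N₂, m₁ ∥ m₂) ⇒ρ (N₁ ∥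 N₂, m₁' ∥ m₂'). -/
/-- A Petri net with places `P` and transitions `T`. -/
structure PetriNet (P T : Type) where
  Pre : T → P → ℕ
  Post : T → P → ℕ

namespace PetriNet

variable {P T : Type}

def Enabled (N : PetriNet P T) (m : P → ℕ) (t : T) : Prop :=
  ∀ p, N.Pre t p ≤ m p

def Fire (N : PetriNet P T) (m : P → ℕ) (t : T) (m' : P → ℕ) : Prop :=
  N.Enabled m t ∧ ∀ p, m' p = m p - N.Pre t p + N.Post t p

def FireSeq (N : PetriNet P T) : (P → ℕ) → List T → (P → ℕ) → Prop
  | m, [], m' => m' = m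
  | m, t :: ρ, m'' => ∃ m', N.Fire m t m' ∧ N.FireSeq m' ρ m''

end PetriNet

/-- A labeled Petri net: a net together with a labeling function into
`Σ ∪ {τ}` (`none` is the silent label `τ`). -/
structure LPN (P T L : Type) extends PetriNet P T where
  label : T → Option L

section Product

variable {P₁ P₂ T₁ T₂ L : Type}

/-- Valid transitions of the synchronous product `N₁ ∥ N₂` (relative to the
alphabets `S₁`, `S₂` of the two nets): `(t, ∘)` when `l₁(t) ∉ Σ₂`, `(∘, t)` when
`l₂(t) ∉ Σ₁`, and `(t₁, t₂)` when `l₁(t₁) = l₂(t₂)` is an (observable) label. -/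
def Valid (l₁ : T₁ → Option L) (l₂ : T₂ → Option L) (S₁ S₂ : Set L) :
    Option T₁ × Option T₂ → Prop
  | (some t₁, none) => ∀ a, l₁ t₁ = some a → a ∉ S₂
  | (none, some t₂) => ∀ a, l₂ t₂ = some a → a ∉ S₁
  | (some t₁, some t₂) => ∃ a, l₁ t₁ = some a ∧ l₂ t₂ = some a
  | (none, none) => False

/-- The synchronous product `N₁ ∥ N₂` of two labeled Petri nets with disjoint
sets of places (here place types `P₁` and `P₂`), flow functions inherited
componentwise. -/
def prodNet (N₁ : LPN P₁ T₁ L) (N₂ : LPN P₂ T₂ L) (S₁ S₂ : Set L) :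
    LPN (P₁ ⊕ P₂) {tp : Option T₁ × Option T₂ // Valid N₁.label N₂.label S₁ S₂ tp} L where
  Pre t p :=
    match p with
    | .inl p => t.val.1.elim 0 fun t₁ => N₁.Pre t₁ p
    | .inr p => t.val.2.elim 0 fun t₂ => N₂.Pre t₂ p
  Post t p :=
    match p with
    | .inl p => t.val.1.elim 0 fun t₁ => N₁.Post t₁ p
    | .inr p => t.val.2.elim 0 fun t₂ => N₂.Post t₂ p
  label t := t.val.1.elim (t.val.2.elim none N₂.label) N₁.label

/-- Projection of a firing sequence of the product on its `i`-th component
(`∘`-components erased). -/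
def proj1 {N₁ : LPN P₁ T₁ L} {N₂ : LPN P₂ T₂ L} {S₁ S₂ : Set L}
    (ρ : List {tp : Option T₁ × Option T₂ // Valid N₁.label N₂.label S₁ S₂ tp}) :
    List T₁ :=
  ρ.filterMap fun t => t.val.1

def proj2 {N₁ : LPN P₁ T₁ L} {N₂ : LPN P₂ T₂ L} {S₁ S₂ : Set L}
    (ρ : List {tp : Option T₁ × Option T₂ // Valid N₁.label N₂.label S₁ S₂ tp}) :
    List T₂ :=
  ρ.filterMap fun t => t.val.2

/-- The zip-merge `ρ₁ ∥ ρ₂` : `Merge N₁ N₂ S₁ S₂ ρ₁ ρ₂ ρ` holds when `ρ` is an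
interleaving of `ρ₁` and `ρ₂` in which transitions with matching labels are
synchronized pairwise.  `ρ₁ ∥ ρ₂ ≠ ∅` means `∃ ρ, Merge N₁ N₂ S₁ S₂ ρ₁ ρ₂ ρ`. -/
inductive Merge (N₁ : LPN P₁ T₁ L) (N₂ : LPN P₂ T₂ L) (S₁ S₂ : Set L) :
    List T₁ → List T₂ →
    List {tp : Option T₁ × Option T₂ // Valid N₁.label N₂.label S₁ S₂ tp} → Prop
  | nil : Merge N₁ N₂ S₁ S₂ [] [] []
  | left (t₁ : T₁) (ρ₁ : List T₁) (ρ₂ : List T₂) ρ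
      (h : Valid N₁.label N₂.label S₁ S₂ (some t₁, none)) :
      Merge N₁ N₂ S₁ S₂ ρ₁ ρ₂ ρ →
      Merge N₁ N₂ S₁ S₂ (t₁ :: ρ₁) ρ₂ (⟨(some t₁, none), h⟩ :: ρ)
  | right (t₂ : T₂) (ρ₁ : List T₁) (ρ₂ : List T₂) ρ
      (h : Valid N₁.label N₂.label S₁ S₂ (none, some t₂)) :
      Merge N₁ N₂ S₁ S₂ ρ₁ ρ₂ ρ →
      Merge N₁ N₂ S₁ S₂ ρ₁ (t₂ :: ρ₂) (⟨(none, some t₂), h⟩ :: ρ)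
  | sync (t₁ : T₁) (t₂ : T₂) (ρ₁ : List T₁) (ρ₂ : List T₂) ρ
      (h : Valid N₁.label N₂.label S₁ S₂ (some t₁, some t₂)) :
      Merge N₁ N₂ S₁ S₂ ρ₁ ρ₂ ρ →
      Merge N₁ N₂ S₁ S₂ (t₁ :: ρ₁) (t₂ :: ρ₂) (⟨(some t₁, some t₂), h⟩ :: ρ)

end Product


open PetriNet in
private lemma prod_proj_aux {P₁ P₂ T₁ T₂ L : Type}
    (N₁ : LPN P₁ T₁ L) (N₂ : LPN P₂ T₂ L) (S₁ S₂ : Set L) :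
    ∀ ρ (m₁ m₁' : P₁ → ℕ) (m₂ m₂' : P₂ → ℕ),
      (prodNet N₁ N₂ S₁ S₂).FireSeq (Sum.elim m₁ m₂) ρ (Sum.elim m₁' m₂') →
      N₁.FireSeq m₁ (proj1 ρ) m₁' ∧ N₂.FireSeq m₂ (proj2 ρ) m₂' ∧
        Merge N₁ N₂ S₁ S₂ (proj1 ρ) (proj2 ρ) ρ := by
  intro ρ
  induction ρ with
  | nil =>
    intro m₁ m₁' m₂ m₂' h
    have h1 : m₁' = m₁ := funext fun p => congrFun h (Sum.inl p)
    have h2 : m₂' = m₂ := funext fun p => congrFun h (Sum.inr p)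
    exact ⟨h1, h2, Merge.nil⟩
  | cons t ρ ih =>
    intro m₁ m₁' m₂ m₂' h
    obtain ⟨m', ⟨hen, hupd⟩, hseq⟩ := h
    have hm' : m' = Sum.elim (fun p => m' (Sum.inl p)) (fun p => m' (Sum.inr p)) := by
      funext x; cases x <;> rfl
    rw [hm'] at hseq
    obtain ⟨⟨o₁, o₂⟩, hv⟩ := t
    match o₁, o₂, hv with
    | some t₁, none, hv =>
      have h1 : (fun p => m' (Sum.inl p)) = fun p => m₁ p - N₁.Pre t₁ p + N₁.Post t₁ p := by
        funext p; exact hupd (Sum.inl p)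
      have h2 : (fun p => m' (Sum.inr p)) = m₂ := by
        funext p; simpa [prodNet] using hupd (Sum.inr p)
      rw [h1, h2] at hseq
      obtain ⟨ha, hb, hc⟩ := ih _ _ _ _ hseq
      refine ⟨⟨_, ⟨fun p => hen (Sum.inl p), fun p => rfl⟩, ha⟩, ?_, ?_⟩
      · simpa [proj2, List.filterMap_cons] using hb
      · simpa [proj1, proj2, List.filterMap_cons] using Merge.left t₁ _ _ _ hv hc
    | none, some t₂, hv =>
      have h1 : (fun p => m' (Sum.inl p)) = m₁ := by
        funext p; simpa [prodNet] using hupd (Sum.inl p)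
      have h2 : (fun p => m' (Sum.inr p)) = fun p => m₂ p - N₂.Pre t₂ p + N₂.Post t₂ p := by
        funext p; exact hupd (Sum.inr p)
      rw [h1, h2] at hseq
      obtain ⟨ha, hb, hc⟩ := ih _ _ _ _ hseq
      refine ⟨?_, ⟨_, ⟨fun p => hen (Sum.inr p), fun p => rfl⟩, hb⟩, ?_⟩
      · simpa [proj1, List.filterMap_cons] using ha
      · simpa [proj1, proj2, List.filterMap_cons] using Merge.right t₂ _ _ _ hv hc
    | some t₁, some t₂, hv =>
      have h1 : (fun p => m' (Sum.inl p)) = fun p => m₁ p - N₁.Pre t₁ p + N₁.Post t₁ p := by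
        funext p; exact hupd (Sum.inl p)
      have h2 : (fun p => m' (Sum.inr p)) = fun p => m₂ p - N₂.Pre t₂ p + N₂.Post t₂ p := by
        funext p; exact hupd (Sum.inr p)
      rw [h1, h2] at hseq
      obtain ⟨ha, hb, hc⟩ := ih _ _ _ _ hseq
      refine ⟨⟨_, ⟨fun p => hen (Sum.inl p), fun p => rfl⟩, ha⟩,
        ⟨_, ⟨fun p => hen (Sum.inr p), fun p => rfl⟩, hb⟩, ?_⟩
      simpa [proj1, proj2, List.filterMap_cons] using Merge.sync t₁ t₂ _ _ _ hv hc

open PetriNet in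
private lemma merge_fireSeq_aux {P₁ P₂ T₁ T₂ L : Type}
    (N₁ : LPN P₁ T₁ L) (N₂ : LPN P₂ T₂ L) (S₁ S₂ : Set L) :
    ∀ (ρ₁ : List T₁) (ρ₂ : List T₂) ρ, Merge N₁ N₂ S₁ S₂ ρ₁ ρ₂ ρ →
      ∀ (m₁ m₁' : P₁ → ℕ) (m₂ m₂' : P₂ → ℕ),
      N₁.FireSeq m₁ ρ₁ m₁' → N₂.FireSeq m₂ ρ₂ m₂' →
      (prodNet N₁ N₂ S₁ S₂).FireSeq (Sum.elim m₁ m₂) ρ (Sum.elim m₁' m₂') := by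
  intro ρ₁ ρ₂ ρ hm
  induction hm with
  | nil =>
    intro m₁ m₁' m₂ m₂' h1 h2
    simp only [FireSeq] at h1 h2 ⊢
    rw [h1, h2]
  | left t₁ ρ₁ ρ₂ ρ hv _ ih =>
    intro m₁ m₁' m₂ m₂' h1 h2
    obtain ⟨n₁, ⟨hen, hupd⟩, hseq⟩ := h1
    refine ⟨Sum.elim n₁ m₂, ⟨?_, ?_⟩, ih _ _ _ _ hseq h2⟩
    · intro p; cases p with
      | inl p => exact hen p
      | inr p => simp [prodNet]
    · intro p; cases p with
      | inl p => exact hupd p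
      | inr p => simp [prodNet]
  | right t₂ ρ₁ ρ₂ ρ hv _ ih =>
    intro m₁ m₁' m₂ m₂' h1 h2
    obtain ⟨n₂, ⟨hen, hupd⟩, hseq⟩ := h2
    refine ⟨Sum.elim m₁ n₂, ⟨?_, ?_⟩, ih _ _ _ _ h1 hseq⟩
    · intro p; cases p with
      | inl p => simp [prodNet]
      | inr p => exact hen p
    · intro p; cases p with
      | inl p => simp [prodNet]
      | inr p => exact hupd p
  | sync t₁ t₂ ρ₁ ρ₂ ρ hv _ ih =>
    intro m₁ m₁' m₂ m₂' h1 h2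
    obtain ⟨n₁, ⟨hen1, hupd1⟩, hseq1⟩ := h1
    obtain ⟨n₂, ⟨hen2, hupd2⟩, hseq2⟩ := h2
    refine ⟨Sum.elim n₁ n₂, ⟨?_, ?_⟩, ih _ _ _ _ hseq1 hseq2⟩
    · intro p; cases p with
      | inl p => exact hen1 p
      | inr p => exact hen2 p
    · intro p; cases p with
      | inl p => exact hupd1 p
      | inr p => exact hupd2 p

open PetriNet in
/-- (Projection and product of sequences.)  A firing sequence of `N₁ ∥ N₂` from
`m₁ ∥ m₂` to `m₁' ∥ m₂'` projects to firing sequences of the components which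
can be synchronized; conversely, any synchronization of component firing
sequences is a firing sequence of the product. -/
theorem prod_fireSeq_iff_proj {P₁ P₂ T₁ T₂ L : Type}
    (N₁ : LPN P₁ T₁ L) (N₂ : LPN P₂ T₂ L) (S₁ S₂ : Set L)
    (m₁ m₁' : P₁ → ℕ) (m₂ m₂' : P₂ → ℕ) :
    (∀ ρ, (prodNet N₁ N₂ S₁ S₂).FireSeq (Sum.elim m₁ m₂) ρ (Sum.elim m₁' m₂') →
      N₁.FireSeq m₁ (proj1 ρ) m₁' ∧ N₂.FireSeq m₂ (proj2 ρ) m₂' ∧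
        Merge N₁ N₂ S₁ S₂ (proj1 ρ) (proj2 ρ) ρ) ∧
    (∀ (ρ₁ : List T₁) (ρ₂ : List T₂) ρ,
      N₁.FireSeq m₁ ρ₁ m₁' → N₂.FireSeq m₂ ρ₂ m₂' →
      Merge N₁ N₂ S₁ S₂ ρ₁ ρ₂ ρ →
      (prodNet N₁ N₂ S₁ S₂).FireSeq (Sum.elim m₁ m₂) ρ (Sum.elim m₁' m₂')) := by
  exact ⟨fun ρ h => prod_proj_aux N₁ N₂ S₁ S₂ ρ m₁ m₁' m₂ m₂' h,
    fun ρ₁ ρ₂ ρ h1 h2 hm => merge_fireSeq_aux N₁ N₂ S₁ S₂ ρ₁ ρ₂ ρ hm m₁ m₁' m₂ m₂' h1 h2⟩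
end

section
/- (Correctness of rule [CONCAT].) Let N₁ be the net with places {y₁, y₂} and transitions: a (labeled a) with Post(a,y₁)=1 and no preconditions; a silent transition τ with Pre(τ,y₁)=1, Post(τ,y₂)=1; b (labeled b) with Pre(b,y₁)=1; c (labeled c) with Pre(c,y₂)=1. Let N₂ be the net with single place x and transitions a (Post(a,x)=1), b (Pre(b,x)=1), c (Pre(c,x)=1). With initial markings m₁(y₁)=K, m₁(y₂)=0 and m₂(x)=K, we have (N₁, m₁) ▷_E (N₂, m₂) where E is the single equation x = y₁ + y₂. -/
/-- `F` is a formula whose (free) variables all belong to `S`: its truth value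
only depends on the values of the variables in `S`. -/
def FormulaDependsOn {V : Type} (F : (V → ℕ) → Prop) (S : Set V) : Prop :=
  ∀ v w : V → ℕ, (∀ x ∈ S, v x = w x) → (F v ↔ F w)

/-! Rule [CONCAT].  Variables: `0 = y₁`, `1 = y₂`, `2 = x`.
Labels: `0 = a`, `1 = b`, `2 = c` (`none = τ`).
`N₁` has transitions `0 = a`, `1 = τ`, `2 = b`, `3 = c`;
`N₂` has transitions `0 = a`, `1 = b`, `2 = c`. -/

/-- The initial net of rule [CONCAT], with places `{y₁, y₂}`. -/
def Nconcat₁ : LNet (Fin 3) (Fin 3) where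
  T := Fin 4
  places := {p | p.val ≤ 1}
  Pre := ![![0, 0, 0], ![1, 0, 0], ![1, 0, 0], ![0, 1, 0]]
  Post := ![![1, 0, 0], ![0, 1, 0], ![0, 0, 0], ![0, 0, 0]]
  pre_supp := by
    intro t p hp
    simp only [Set.mem_setOf_eq, not_le] at hp
    have h3 := p.isLt
    have hp2 : p = 2 := Fin.ext (by omega)
    subst hp2
    fin_cases t <;> rfl
  post_supp := by
    intro t p hp
    simp only [Set.mem_setOf_eq, not_le] at hp
    have h3 := p.isLt
    have hp2 : p = 2 := Fin.ext (by omega)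
    subst hp2
    fin_cases t <;> rfl
  label := ![some 0, none, some 1, some 2]

/-- The reduced net of rule [CONCAT], with single place `x`. -/
def Nconcat₂ : LNet (Fin 3) (Fin 3) where
  T := Fin 3
  places := {p | p.val = 2}
  Pre := ![![0, 0, 0], ![0, 0, 1], ![0, 0, 1]]
  Post := ![![0, 0, 1], ![0, 0, 0], ![0, 0, 0]]
  pre_supp := by
    intro t p hp
    simp only [Set.mem_setOf_eq] at hp
    have h3 := p.isLt
    fin_cases p <;> simp_all <;> fin_cases t <;> rfl
  post_supp := by
    intro t p hp
    simp only [Set.mem_setOf_eq] at hp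
    have h3 := p.isLt
    fin_cases p <;> simp_all <;> fin_cases t <;> rfl
  label := ![some 0, some 1, some 2]

/-!
The equation `x = y₁ + y₂` is the invariant of a simulation in each direction. Every
transition of `N₁` is matched by the equally labelled transition of `N₂`, the silent `τ`
by nothing, and this keeps `x = y₁ + y₂`. Conversely `N₁` simulates `N₂` keeping all its
tokens on `y₁`; any split of `x` into `y₁ + y₂` is then reached by firing `y₂` many
unobservable `τ`s.
-/

namespace LNet

variable {V L : Type} {N M : LNet V L}

lemma fire_of_enabled {m : V → ℕ} {t : N.T} (h : N.Enabled m t) :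
    N.Fire m t (fun p => m p - N.Pre t p + N.Post t p) :=
  ⟨h, fun _ => rfl⟩

lemma Fire.fireSeq_singleton {m m' : V → ℕ} {t : N.T} (h : N.Fire m t m') :
    N.FireSeq m [t] m' :=
  ⟨m', h, rfl⟩

lemma FireSeq.append {m m' m'' : V → ℕ} {ρ₁ ρ₂ : List N.T} (h₁ : N.FireSeq m ρ₁ m')
    (h₂ : N.FireSeq m' ρ₂ m'') : N.FireSeq m (ρ₁ ++ ρ₂) m'' := by
  induction ρ₁ generalizing m with
  | nil => cases h₁; exact h₂
  | cons t ρ ih =>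
    obtain ⟨w, hf, hs⟩ := h₁
    exact ⟨w, hf, ih hs⟩

lemma obs_append (ρ₁ ρ₂ : List N.T) : N.Obs (ρ₁ ++ ρ₂) = N.Obs ρ₁ ++ N.Obs ρ₂ :=
  List.filterMap_append

lemma obs_replicate_of_label_eq_none {t : N.T} (ht : N.label t = none) (k : ℕ) :
    N.Obs (List.replicate k t) = [] := by
  simp [Obs, ht]

theorem FireSeq.simulate (R : (V → ℕ) → (V → ℕ) → Prop)
    (step : ∀ {m m' n t}, R m n → N.Fire m t m' →
      ∃ σ n', M.FireSeq n σ n' ∧ R m' n' ∧ N.Obs [t] = M.Obs σ)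
    {ρ : List N.T} {m m' n : V → ℕ} (h : N.FireSeq m ρ m') (hR : R m n) :
    ∃ σ n', M.FireSeq n σ n' ∧ R m' n' ∧ N.Obs ρ = M.Obs σ := by
  induction ρ generalizing m n with
  | nil => cases h; exact ⟨[], n, rfl, hR, rfl⟩
  | cons t ρ ih =>
    obtain ⟨w, hf, hs⟩ := h
    obtain ⟨σ₁, n₁, hσ₁, hR₁, ho₁⟩ := step hR hf
    obtain ⟨σ₂, n₂, hσ₂, hR₂, ho₂⟩ := ih hs hR₁
    refine ⟨σ₁ ++ σ₂, n₂, hσ₁.append hσ₂, hR₂, ?_⟩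
    rw [← List.singleton_append, obs_append, obs_append, ho₁, ho₂]

end LNet

open LNet

lemma jsat_comm {V L : Type} {N₁ N₂ : LNet V L} {E : (V → ℕ) → Prop} {m₁ m₂ : V → ℕ} :
    JSat N₁ N₂ E m₁ m₂ ↔ JSat N₂ N₁ E m₂ m₁ :=
  ⟨fun ⟨v, h₁, h₂, hE⟩ => ⟨v, h₂, h₁, hE⟩, fun ⟨v, h₂, h₁, hE⟩ => ⟨v, h₁, h₂, hE⟩⟩

lemma jsat_concat_iff {a b : Fin 3 → ℕ} :
    JSat Nconcat₁ Nconcat₂ (fun v => v 2 = v 0 + v 1) a b ↔ b 2 = a 0 + a 1 := by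
  constructor
  · rintro ⟨v, ha, hb, hE⟩
    rwa [← ha 0 (by simp [Nconcat₁]), ← ha 1 (by simp [Nconcat₁]), ← hb 2 rfl]
  · intro h
    refine ⟨![a 0, a 1, b 2], fun p hp => ?_, fun p hp => ?_, by simpa using h⟩ <;>
      fin_cases p <;> simp_all [Nconcat₁, Nconcat₂]

lemma concat_forward_step {m m' n : Fin 3 → ℕ} {t : Fin 4} (hR : n 2 = m 0 + m 1)
    (h : Nconcat₁.Fire m t m') :
    ∃ σ n', Nconcat₂.FireSeq n σ n' ∧ n' 2 = m' 0 + m' 1 ∧ Nconcat₁.Obs [t] = Nconcat₂.Obs σ := by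
  obtain ⟨hen, hm'⟩ := h
  fin_cases t <;> simp [Enabled, Fin.forall_fin_succ, Nconcat₁] at hen hm'
  · refine ⟨[(0 : Fin 3)], _, (fire_of_enabled ?_).fireSeq_singleton, ?_, rfl⟩
    · intro p; fin_cases p <;> simp [Nconcat₂]
    · simp [Nconcat₂]; omega
  · exact ⟨[], n, rfl, by omega, rfl⟩
  · refine ⟨[(1 : Fin 3)], _, (fire_of_enabled ?_).fireSeq_singleton, ?_, rfl⟩
    · intro p; fin_cases p <;> simp [Nconcat₂]; omega
    · simp [Nconcat₂]; omega
  · refine ⟨[(2 : Fin 3)], _, (fire_of_enabled ?_).fireSeq_singleton, ?_, rfl⟩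
    · intro p; fin_cases p <;> simp [Nconcat₂]; omega
    · simp [Nconcat₂]; omega

lemma concat_backward_step {n n' m : Fin 3 → ℕ} {t : Fin 3} (hR : m 0 = n 2 ∧ m 1 = 0)
    (h : Nconcat₂.Fire n t n') :
    ∃ ρ m', Nconcat₁.FireSeq m ρ m' ∧ (m' 0 = n' 2 ∧ m' 1 = 0) ∧
      Nconcat₂.Obs [t] = Nconcat₁.Obs ρ := by
  obtain ⟨hen, hn'⟩ := h
  fin_cases t <;> simp [Enabled, Fin.forall_fin_succ, Nconcat₂] at hen hn'
  · refine ⟨[(0 : Fin 4)], _, (fire_of_enabled ?_).fireSeq_singleton, ?_, rfl⟩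
    · intro p; fin_cases p <;> simp [Nconcat₁]
    · simp [Nconcat₁]; omega
  · refine ⟨[(2 : Fin 4)], _, (fire_of_enabled ?_).fireSeq_singleton, ?_, rfl⟩
    · intro p; fin_cases p <;> simp [Nconcat₁]; omega
    · simp [Nconcat₁]; omega
  -- `c` has no token on `y₂` to consume, so a silent `τ` first moves one there
  · refine ⟨[(1 : Fin 4), (3 : Fin 4)], _, ⟨_, fire_of_enabled ?_, _, fire_of_enabled ?_, rfl⟩,
      ?_, rfl⟩
    · intro p; fin_cases p <;> simp [Nconcat₁]; omega
    · intro p; fin_cases p <;> simp [Nconcat₁]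
    · simp [Nconcat₁]; omega

lemma Nconcat₁.fireSeq_replicate_tau (k : ℕ) {m : Fin 3 → ℕ} (hk : k ≤ m 0) :
    ∃ m', Nconcat₁.FireSeq m (List.replicate k (1 : Fin 4)) m' ∧
      m' 0 = m 0 - k ∧ m' 1 = m 1 + k := by
  induction k generalizing m with
  | zero => exact ⟨m, rfl, rfl, rfl⟩
  | succ k ih =>
    have hτ : Nconcat₁.Enabled m (1 : Fin 4) := by
      intro p; fin_cases p <;> simp [Nconcat₁]; omega
    obtain ⟨m', hρ, h₀, h₁⟩ :=
      ih (m := fun p => m p - Nconcat₁.Pre (1 : Fin 4) p + Nconcat₁.Post (1 : Fin 4) p)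
        (by simp [Nconcat₁]; omega)
    refine ⟨m', ⟨_, fire_of_enabled hτ, hρ⟩, ?_, ?_⟩ <;> simp [Nconcat₁] at h₀ h₁ <;> omega

lemma concat_eabs_forward {m₁ m₂ : Fin 3 → ℕ} (h : m₂ 2 = m₁ 0 + m₁ 1) :
    EAbs Nconcat₁ m₁ Nconcat₂ m₂ (fun v => v 2 = v 0 + v 1) := by
  refine ⟨jsat_concat_iff.2 h, fun ρ m₁' hρ =>
    ⟨⟨![0, 0, m₁' 0 + m₁' 1], jsat_concat_iff.2 (by simp)⟩, fun m₂' hm₂' => ?_⟩⟩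
  obtain ⟨σ, n, hσ, hn, hobs⟩ :=
    hρ.simulate (fun m n => n 2 = m 0 + m 1) concat_forward_step h
  refine ⟨σ, n, hσ, fun p hp => ?_, hobs⟩
  obtain rfl : p = 2 := Fin.ext hp
  rw [hn, jsat_concat_iff.1 hm₂']

lemma concat_eabs_backward {m₁ m₂ : Fin 3 → ℕ} (h₀ : m₁ 0 = m₂ 2) (h₁ : m₁ 1 = 0) :
    EAbs Nconcat₂ m₂ Nconcat₁ m₁ (fun v => v 2 = v 0 + v 1) := by
  refine ⟨jsat_comm.1 (jsat_concat_iff.2 (by omega)),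
    fun σ n hσ => ⟨⟨![n 2, 0, 0], jsat_comm.1 (jsat_concat_iff.2 (by simp))⟩, fun m₁' hm₁' => ?_⟩⟩
  have hsplit := jsat_concat_iff.1 (jsat_comm.1 hm₁')
  obtain ⟨ρ, m, hρ, ⟨hm₀, hm₁⟩, hobs⟩ :=
    hσ.simulate (fun n m => m 0 = n 2 ∧ m 1 = 0) concat_backward_step ⟨h₀, h₁⟩
  obtain ⟨m', hτ, hm'₀, hm'₁⟩ := Nconcat₁.fireSeq_replicate_tau (m₁' 1) (m := m) (by omega)
  refine ⟨_, m', hρ.append hτ, fun p hp => ?_, ?_⟩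
  · fin_cases p <;> simp_all [Nconcat₁]
  · rw [obs_append, obs_replicate_of_label_eq_none (N := Nconcat₁) (t := (1 : Fin 4)) rfl,
      List.append_nil, hobs]

/-- (Correctness of rule [CONCAT].)  With initial markings `m₁(y₁) = K`,
`m₁(y₂) = 0` and `m₂(x) = K`, we have `(N₁, m₁) ▷_E (N₂, m₂)` where `E` is the
single equation `x = y₁ + y₂`. -/
theorem concat_correct (K : ℕ) (m₁ m₂ : Fin 3 → ℕ)
    (h₁ : m₁ 0 = K) (h₂ : m₁ 1 = 0) (h₃ : m₂ 2 = K) :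
    EEquiv Nconcat₁ m₁ Nconcat₂ m₂ (fun v => v 2 = v 0 + v 1) :=
  ⟨concat_eabs_forward (by omega), concat_eabs_backward (by omega) h₂⟩
end

section
/- (Correctness of rule [RED].) Let N₁ be the net with places {y, z} and transitions: a (labeled a) with Post(a,y)=1, Post(a,z)=1; b (labeled b) with Pre(b,y)=1, Pre(b,z)=1. Let N₂ be the net with single place y and transitions a (Post(a,y)=1), b (Pre(b,y)=1). With initial markings m₁(y)=K, m₁(z)=N where K ≤ N, and m₂(y)=K, we have (N₁, m₁) ▷_E (N₂, m₂) where E is the equation z = y + N − K. -/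
/-! Rule [RED].  Variables: `0 = y`, `1 = z`.  Labels: `0 = a`, `1 = b`.
Both nets have transitions `0 = a`, `1 = b`. -/

/-- The initial net of rule [RED], with places `{y, z}`: `a` adds one token to
each of `y` and `z`, `b` removes one token from each. -/
def Nred₁ : LNet (Fin 2) (Fin 2) where
  T := Fin 2
  places := Set.univ
  Pre := ![![0, 0], ![1, 1]]
  Post := ![![1, 1], ![0, 0]]
  pre_supp := by intro t p hp; exact absurd (Set.mem_univ p) hp
  post_supp := by intro t p hp; exact absurd (Set.mem_univ p) hp
  label := ![some 0, some 1]

/-- The reduced net of rule [RED], with single place `y`. -/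
def Nred₂ : LNet (Fin 2) (Fin 2) where
  T := Fin 2
  places := {p | p.val = 0}
  Pre := ![![0, 0], ![1, 0]]
  Post := ![![1, 0], ![0, 0]]
  pre_supp := by
    intro t p hp
    simp only [Set.mem_setOf_eq] at hp
    have h2 := p.isLt
    have hp1 : p = 1 := Fin.ext (by omega)
    subst hp1
    fin_cases t <;> rfl
  post_supp := by
    intro t p hp
    simp only [Set.mem_setOf_eq] at hp
    have h2 := p.isLt
    have hp1 : p = 1 := Fin.ext (by omega)
    subst hp1
    fin_cases t <;> rfl
  label := ![some 0, some 1]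

/-!
Every transition of `Nred₁` changes `y` and `z` by the same amount, so `z - y` is invariant
and `z = y + (N - K)` holds in every reachable marking. Under this invariant the token count
of `z` never blocks `b` once `y` does not, so `Nred₁` and `Nred₂` fire the same sequences in
lockstep, with equal `y`. Conversely `E` pins `z` down from `y`, so a marking of either net
determines the `E`-compatible markings of the other one on its places.
-/

namespace LNet

variable {V L : Type}

theorem obs_map {N₁ N₂ : LNet V L} (f : N₁.T → N₂.T) (hf : ∀ t, N₂.label (f t) = N₁.label t)
    (ρ : List N₁.T) : N₂.Obs (ρ.map f) = N₁.Obs ρ := by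
  simp only [Obs, List.filterMap_map, Function.comp_def, hf]

theorem FireSeq.exists_simulation {N₁ N₂ : LNet V L} (R : (V → ℕ) → (V → ℕ) → Prop)
    (f : N₁.T → N₂.T)
    (hstep : ∀ {m n t m'}, R m n → N₁.Fire m t m' → ∃ n', N₂.Fire n (f t) n' ∧ R m' n') :
    ∀ {ρ : List N₁.T} {m n m'}, R m n → N₁.FireSeq m ρ m' →
      ∃ n', N₂.FireSeq n (ρ.map f) n' ∧ R m' n'
  | [], m, n, m', hR, hseq => ⟨n, rfl, (show m' = m from hseq) ▸ hR⟩
  | _ :: _, _, _, _, hR, ⟨_, hfire, hseq⟩ =>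
    let ⟨_, hfire', hR'⟩ := hstep hR hfire
    let ⟨n'', hseq', hR''⟩ := FireSeq.exists_simulation R f hstep hR' hseq
    ⟨n'', ⟨_, hfire', hseq'⟩, hR''⟩

end LNet

theorem jSat_comm {V L : Type} {N₁ N₂ : LNet V L} {E : (V → ℕ) → Prop} {m₁ m₂ : V → ℕ} :
    JSat N₂ N₁ E m₂ m₁ ↔ JSat N₁ N₂ E m₁ m₂ :=
  ⟨fun ⟨v, h₂, h₁, hE⟩ => ⟨v, h₁, h₂, hE⟩, fun ⟨v, h₁, h₂, hE⟩ => ⟨v, h₂, h₁, hE⟩⟩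

theorem EAbs.of_simulation {V L : Type} {N₁ N₂ : LNet V L} {m₁ m₂ : V → ℕ}
    {E : (V → ℕ) → Prop} (f : N₁.T → N₂.T) (hlabel : ∀ t, N₂.label (f t) = N₁.label t)
    (hinit : JSat N₁ N₂ E m₁ m₂)
    (hstep : ∀ {m n t m'}, JSat N₁ N₂ E m n → N₁.Fire m t m' →
      ∃ n', N₂.Fire n (f t) n' ∧ JSat N₁ N₂ E m' n')
    (hdet : ∀ {m n n'}, JSat N₁ N₂ E m n → JSat N₁ N₂ E m n' → ∀ p ∈ N₂.places, n p = n' p) :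
    EAbs N₁ m₁ N₂ m₂ E := by
  refine ⟨hinit, fun ρ m hρ => ?_⟩
  obtain ⟨n, hseq, hn⟩ := LNet.FireSeq.exists_simulation _ f hstep hinit hρ
  exact ⟨⟨n, hn⟩, fun n' hn' => ⟨ρ.map f, n, hseq, hdet hn hn', (LNet.obs_map f hlabel ρ).symm⟩⟩

section Red

variable {c : ℕ}

theorem Nred₂_mem_places {p : Fin 2} : p ∈ Nred₂.places ↔ p = 0 :=
  ⟨fun h => Fin.ext h, fun h => h ▸ rfl⟩

theorem Nred₁_pre_one (t : Fin 2) : Nred₁.Pre t 1 = Nred₁.Pre t 0 := by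
  fin_cases t <;> rfl

theorem Nred₁_post_one (t : Fin 2) : Nred₁.Post t 1 = Nred₁.Post t 0 := by
  fin_cases t <;> rfl

theorem Nred₂_pre_zero (t : Fin 2) : Nred₂.Pre t 0 = Nred₁.Pre t 0 := by
  fin_cases t <;> rfl

theorem Nred₂_post_zero (t : Fin 2) : Nred₂.Post t 0 = Nred₁.Post t 0 := by
  fin_cases t <;> rfl

theorem Nred₂_pre_one (t : Fin 2) : Nred₂.Pre t 1 = 0 := by
  fin_cases t <;> rfl

theorem jSat_red_iff {m n : Fin 2 → ℕ} :
    JSat Nred₁ Nred₂ (fun v => v 1 = v 0 + c) m n ↔ n 0 = m 0 ∧ m 1 = m 0 + c := by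
  constructor
  · rintro ⟨v, hv₁, hv₂, hE⟩
    have hy := hv₁ 0 trivial
    have hz := hv₁ 1 trivial
    have hy' := hv₂ 0 rfl
    constructor <;> omega
  · rintro ⟨hy, hz⟩
    exact ⟨m, fun _ _ => rfl, fun p hp => by rw [Nred₂_mem_places.1 hp, hy], hz⟩

theorem Nred₁_fire_simulate {m n m' : Fin 2 → ℕ} {t : Fin 2}
    (hR : JSat Nred₁ Nred₂ (fun v => v 1 = v 0 + c) m n) (hfire : Nred₁.Fire m t m') :
    ∃ n', Nred₂.Fire n t n' ∧ JSat Nred₁ Nred₂ (fun v => v 1 = v 0 + c) m' n' := by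
  obtain ⟨hy, hz⟩ := jSat_red_iff.1 hR
  obtain ⟨hen, hm'⟩ := hfire
  refine ⟨fun p => n p - Nred₂.Pre t p + Nred₂.Post t p, ⟨fun p => ?_, fun _ => rfl⟩,
    jSat_red_iff.2 ⟨?_, ?_⟩⟩
  · fin_cases p
    · simpa [Nred₂_pre_zero, hy] using hen 0
    · exact (Nred₂_pre_one t).trans_le (Nat.zero_le _)
  · simp only [hm', Nred₂_pre_zero, Nred₂_post_zero, hy]
  · have := hen 0
    simp only [hm', Nred₁_pre_one, Nred₁_post_one]
    omega

theorem Nred₂_fire_simulate {n m n' : Fin 2 → ℕ} {t : Fin 2}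
    (hR : JSat Nred₂ Nred₁ (fun v => v 1 = v 0 + c) n m) (hfire : Nred₂.Fire n t n') :
    ∃ m', Nred₁.Fire m t m' ∧ JSat Nred₂ Nred₁ (fun v => v 1 = v 0 + c) n' m' := by
  obtain ⟨hy, hz⟩ := jSat_red_iff.1 (jSat_comm.1 hR)
  obtain ⟨hen, hn'⟩ := hfire
  have hpre : Nred₁.Pre t 0 ≤ m 0 := Nred₂_pre_zero t ▸ hy ▸ hen 0
  refine ⟨fun p => m p - Nred₁.Pre t p + Nred₁.Post t p, ⟨fun p => ?_, fun _ => rfl⟩,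
    jSat_comm.2 (jSat_red_iff.2 ⟨?_, ?_⟩)⟩
  · fin_cases p
    · exact hpre
    · show Nred₁.Pre t 1 ≤ m 1
      rw [Nred₁_pre_one]
      omega
  · simp only [hn', Nred₂_pre_zero, Nred₂_post_zero, hy]
  · simp only [Nred₁_pre_one, Nred₁_post_one]
    omega

theorem Nred₂_eq_of_jSat {m n n' : Fin 2 → ℕ}
    (h : JSat Nred₁ Nred₂ (fun v => v 1 = v 0 + c) m n)
    (h' : JSat Nred₁ Nred₂ (fun v => v 1 = v 0 + c) m n') :
    ∀ p ∈ Nred₂.places, n p = n' p := by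
  intro p hp
  rw [Nred₂_mem_places.1 hp, (jSat_red_iff.1 h).1, (jSat_red_iff.1 h').1]

theorem Nred₁_eq_of_jSat {n m m' : Fin 2 → ℕ}
    (h : JSat Nred₂ Nred₁ (fun v => v 1 = v 0 + c) n m)
    (h' : JSat Nred₂ Nred₁ (fun v => v 1 = v 0 + c) n m') :
    ∀ p ∈ Nred₁.places, m p = m' p := by
  obtain ⟨hy, hz⟩ := jSat_red_iff.1 (jSat_comm.1 h)
  obtain ⟨hy', hz'⟩ := jSat_red_iff.1 (jSat_comm.1 h')
  intro p _
  fin_cases p <;> simp only [Fin.zero_eta, Fin.mk_one] <;> omega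

end Red

/-- (Correctness of rule [RED].)  With initial markings `m₁(y) = K`,
`m₁(z) = N` where `K ≤ N`, and `m₂(y) = K`, we have `(N₁, m₁) ▷_E (N₂, m₂)`
where `E` is the equation `z = y + N − K`. -/
theorem red_correct (K N : ℕ) (hKN : K ≤ N) (m₁ m₂ : Fin 2 → ℕ)
    (h₁ : m₁ 0 = K) (h₂ : m₁ 1 = N) (h₃ : m₂ 0 = K) :
    EEquiv Nred₁ m₁ Nred₂ m₂ (fun v => v 1 = v 0 + (N - K)) := by
  have hinit : JSat Nred₁ Nred₂ (fun v => v 1 = v 0 + (N - K)) m₁ m₂ :=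
    jSat_red_iff.2 ⟨by omega, by omega⟩
  exact ⟨EAbs.of_simulation (fun t => t) (fun _ => rfl) hinit
      Nred₁_fire_simulate Nred₂_eq_of_jSat,
    EAbs.of_simulation (fun t => t) (fun _ => rfl) (jSat_comm.2 hinit)
      Nred₂_fire_simulate Nred₁_eq_of_jSat⟩
end
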